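/- For the random-walk dynamical system, define 𝔊_m:={F∈L^∞(X,ℬ_{−m,m},μ) : Avg(F) exists} and 𝔊:= the closure in the L^∞-norm of ⋃_{m∈ℕ} 𝔊_m. Then 𝔊 equals the set of all F in the L^∞-closure of ⋃_{m∈ℕ} L^∞(X,ℬ_{−m,m},μ) for which Avg(F) exists. -/

import Mathlib

noncomputable section

open MeasureTheory Filter Topology

/-- The phase space `X = ℤ^d × [0,1)²` (embedded in `ℤ^d × ℝ²`; the invariant measure
is supported on `ℤ^d × [0,1)²`). -/
abbrev RWSpace (d : ℕ) := (Fin d → ℤ) × ℝ × ℝ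

/-- The data of a random walk on `ℤ^d`: a probability distribution `p` on `ℤ^d` together
with an enumeration `e` of `ℤ^d` (whose restriction to the support of `p` enumerates the
set `D` of active directions; indices carrying zero probability contribute empty
rectangles and do not affect the map). -/
structure RW (d : ℕ) where
  p : (Fin d → ℤ) → ℝ
  nonneg : ∀ β, 0 ≤ p β
  total : HasSum p 1
  e : ℕ ≃ (Fin d → ℤ)

namespace RW

variable {d : ℕ}

/-- The cumulative sums `q_k = Σ_{j<k} p_{β^{(j)}}`. -/
def q (R : RW d) (k : ℕ) : ℝ := ∑ j ∈ Finset.range k, R.p (R.e j)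

/-- The index `k` such that `y ∈ [q_k, q_{k+1})` (for `y ∈ [0,1)`). -/
def idx (R : RW d) (y : ℝ) : ℕ := sSup {j | R.q j ≤ y}

/-- The random-walk (coupled bakers') map
`T(α; y₁, y₂) = (α + β^{(k)}; p_{β^{(k)}}⁻¹(y₁ − q_{k-1}), p_{β^{(k)}} y₂ + q_{k-1})`. -/
def T (R : RW d) : RWSpace d → RWSpace d := fun x =>
  (x.1 + R.e (R.idx x.2.1),
   (x.2.1 - R.q (R.idx x.2.1)) / R.p (R.e (R.idx x.2.1)),
   R.p (R.e (R.idx x.2.1)) * x.2.2 + R.q (R.idx x.2.1))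

/-- The inverse of the random-walk map. -/
def Tinv (R : RW d) : RWSpace d → RWSpace d := fun x =>
  (x.1 - R.e (R.idx x.2.2),
   R.p (R.e (R.idx x.2.2)) * x.2.1 + R.q (R.idx x.2.2),
   (x.2.2 - R.q (R.idx x.2.2)) / R.p (R.e (R.idx x.2.2)))

/-- The iterate `T^t` for `t ∈ ℤ` (using the inverse map for negative times). -/
def iterZ (R : RW d) (t : ℤ) : RWSpace d → RWSpace d :=
  if 0 ≤ t then (R.T)^[t.toNat] else (R.Tinv)^[(-t).toNat]

end RW

/-- The invariant measure `μ`: counting measure on `ℤ^d` times Lebesgue measure on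
`[0,1)²`. -/
def rwMeasure (d : ℕ) : Measure (RWSpace d) :=
  (Measure.count : Measure (Fin d → ℤ)).prod
    ((volume.restrict (Set.Ico (0:ℝ) 1)).prod (volume.restrict (Set.Ico (0:ℝ) 1)))

/-- The set `V = B_{γ,r} × [0,1)²`, where `B_{γ,r}` is the square box of center `γ` and
radius `r` in `ℤ^d`. -/
def rwBox {d : ℕ} (γ : Fin d → ℤ) (r : ℕ) : Set (RWSpace d) :=
  {x | (∀ i, |x.1 i - γ i| ≤ (r : ℤ)) ∧ x.2.1 ∈ Set.Ico (0:ℝ) 1 ∧ x.2.2 ∈ Set.Ico (0:ℝ) 1}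

/-- The exhaustive family `𝒱 = {B_{γ,r} × [0,1)² : γ ∈ ℤ^d, r ∈ ℤ⁺}`. -/
def rwFamily (d : ℕ) : Set (Set (RWSpace d)) :=
  {V | ∃ γ : Fin d → ℤ, ∃ r : ℕ, 1 ≤ r ∧ V = rwBox γ r}

/-- The (μ-uniform) infinite-volume limit of a set function `φ` along the family `𝒱`
equals `L`. -/
def IVLim {Y : Type*} [MeasurableSpace Y] (μ : Measure Y) (𝒱 : Set (Set Y))
    (φ : Set Y → ℝ) (L : ℝ) : Prop :=
  ∀ ε > 0, ∃ M : ℝ, 0 < M ∧ ∀ V ∈ 𝒱, M ≤ (μ V).toReal → |φ V - L| < ε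

/-- The normalized average `μ_V(F) = (1/μ(V)) ∫_V F dμ` of `F` over a set `V`. -/
def avgOn {Y : Type*} [MeasurableSpace Y] (μ : Measure Y) (F : Y → ℝ) (V : Set Y) : ℝ :=
  (∫ x in V, F x ∂μ) / (μ V).toReal

/-- `F` possesses the infinite-volume average `L` along the family `𝒱`. -/
def HasAvg {Y : Type*} [MeasurableSpace Y] (μ : Measure Y) (𝒱 : Set (Set Y))
    (F : Y → ℝ) (L : ℝ) : Prop :=
  IVLim μ 𝒱 (avgOn μ F) L

/-- The σ-algebra `ℬ` generated by the partition `{S_α}` of the phase space into unit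
squares `S_α = {α} × [0,1)²`. -/
def rwB0 (d : ℕ) : MeasurableSpace (RWSpace d) :=
  MeasurableSpace.generateFrom
    {S | ∃ α : Fin d → ℤ, S = {α} ×ˢ (Set.Ico (0:ℝ) 1 ×ˢ Set.Ico (0:ℝ) 1)}

/-- The σ-algebra `T^k ℬ = {T^{-k} A : A ∈ ℬ}` for `k ∈ ℤ`. -/
def rwBk {d : ℕ} (R : RW d) (k : ℤ) : MeasurableSpace (RWSpace d) :=
  MeasurableSpace.comap (RW.iterZ R k) (rwB0 d)

/-- The σ-algebra `ℬ_{ℓ,m} = T^ℓ ℬ ∨ ⋯ ∨ T^m ℬ`. -/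
def rwBlm {d : ℕ} (R : RW d) (l m : ℤ) : MeasurableSpace (RWSpace d) :=
  ⨆ k ∈ Finset.Icc l m, rwBk R k

/-- `L^∞(X, ℬ_{−m,m}, μ)`: bounded observables measurable w.r.t. `ℬ_{−m,m}`. -/
def rwLinftyB {d : ℕ} (R : RW d) (m : ℕ) : Set (RWSpace d → ℝ) :=
  {F | Measurable[rwBlm R (-(m : ℤ)) (m : ℤ)] F ∧ ∃ C, ∀ x, |F x| ≤ C}

/-- The class of global observables `𝔊_m`. -/
def rwG {d : ℕ} (R : RW d) (m : ℕ) : Set (RWSpace d → ℝ) :=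
  {F | F ∈ rwLinftyB R m ∧ ∃ A : ℝ, HasAvg (rwMeasure d) (rwFamily d) F A}

/-!
Averages over a box of positive finite measure move by at most `ε` under an a.e. perturbation
of size `ε`. Hence, along the filter of large boxes, the averages of a uniform limit of
functions with infinite-volume averages are Cauchy, and converge. Conversely, if `F` has an
average and `|F - G| ≤ ε` with `G ∈ L^∞(ℬ_{-m,m})`, add to `G` the `ℬ`-measurable function equal
on each square `S_α` to the mean of `F - G` over `S_α`. The result is still in
`L^∞(ℬ_{-m,m})` and `2ε`-close to `F`, and since every box is a finite union of squares its
integral over every box is that of `F`; so it has the same average as `F`.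
-/

section InfiniteVolume

variable {Y : Type*} [MeasurableSpace Y] {μ : Measure Y} {𝒱 : Set (Set Y)}

lemma exists_tendsto_of_forall_eventually_dist_lt {α E : Type*} [PseudoMetricSpace E]
    [CompleteSpace E] {l : Filter α} {φ : α → E}
    (h : ∀ ε > 0, ∃ L, ∀ᶠ x in l, dist (φ x) L < ε) : ∃ L, Tendsto φ l (𝓝 L) := by
  rcases l.eq_or_neBot with rfl | hl
  · obtain ⟨L, -⟩ := h 1 one_pos
    exact ⟨L, tendsto_bot⟩
  refine cauchy_map_iff_exists_tendsto.1 (Metric.cauchy_iff.2 ⟨map_neBot, fun ε hε => ?_⟩)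
  obtain ⟨L, hL⟩ := h (ε / 2) (half_pos hε)
  exact ⟨Metric.ball L (ε / 2), hL, fun x hx y hy => by
    linarith [dist_triangle_right x y L, Metric.mem_ball.1 hx, Metric.mem_ball.1 hy]⟩

def largeVolume (μ : Measure Y) (𝒱 : Set (Set Y)) : Filter (Set Y) :=
  comap (fun V => (μ V).toReal) atTop ⊓ 𝓟 𝒱

lemma ivLim_iff_tendsto {φ : Set Y → ℝ} {L : ℝ} :
    IVLim μ 𝒱 φ L ↔ Tendsto φ (largeVolume μ 𝒱) (𝓝 L) := by
  simp only [IVLim, largeVolume, Metric.tendsto_nhds, Real.dist_eq, eventually_inf_principal,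
    eventually_comap, eventually_atTop]
  refine forall₂_congr fun ε _ => ⟨fun ⟨M, _, hM⟩ => ⟨M, fun _ hb V hV hVM => ?_⟩, ?_⟩
  · exact hM V hVM (hV ▸ hb)
  · rintro ⟨M, hM⟩
    exact ⟨max M 1, by positivity, fun V hV hVM => hM _ (le_of_max_le_left hVM) V rfl hV⟩

lemma exists_hasAvg_of_forall_abs_avgOn_sub_le {F : Y → ℝ}
    (h : ∀ ε > 0, ∃ G A, HasAvg μ 𝒱 G A ∧ ∀ V ∈ 𝒱, |avgOn μ F V - avgOn μ G V| ≤ ε) :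
    ∃ A, HasAvg μ 𝒱 F A := by
  simp only [HasAvg, ivLim_iff_tendsto] at h ⊢
  refine exists_tendsto_of_forall_eventually_dist_lt fun ε hε => ?_
  obtain ⟨G, A, hA, hFG⟩ := h (ε / 2) (half_pos hε)
  refine ⟨A, ?_⟩
  filter_upwards [hA (Metric.ball_mem_nhds A (half_pos hε)),
    mem_inf_of_right (mem_principal_self 𝒱)] with V hGV hV
  linarith [dist_triangle (avgOn μ F V) (avgOn μ G V) A, Real.dist_eq (avgOn μ F V) (avgOn μ G V),
    hFG V hV, Metric.mem_ball.1 hGV]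

lemma abs_avgOn_sub_le {f g : Y → ℝ} {V : Set Y} {C : ℝ} (hV : 0 < (μ V).toReal)
    (hf : IntegrableOn f V μ) (hg : IntegrableOn g V μ) (hfg : ∀ᵐ x ∂μ, |f x - g x| ≤ C) :
    |avgOn μ f V - avgOn μ g V| ≤ C := by
  rw [avgOn, avgOn, div_sub_div_same, ← integral_sub hf hg, abs_div, abs_of_pos hV,
    div_le_iff₀ hV]
  simpa [measureReal_def] using norm_setIntegral_le_of_norm_le_const_ae
    (ENNReal.toReal_pos_iff.1 hV).2 (ae_restrict_of_ae (p := fun x => ‖f x - g x‖ ≤ C) hfg)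

lemma aemeasurable_of_forall_ae_abs_sub_le {F : Y → ℝ}
    (h : ∀ ε > 0, ∃ G, AEMeasurable G μ ∧ ∀ᵐ x ∂μ, |F x - G x| ≤ ε) : AEMeasurable F μ := by
  choose G hGm hFG using fun n : ℕ => h (1 / (n + 1)) Nat.one_div_pos_of_nat
  refine aemeasurable_of_tendsto_metrizable_ae atTop hGm ?_
  filter_upwards [ae_all_iff.2 hFG] with x hx
  refine tendsto_iff_dist_tendsto_zero.2 (squeeze_zero (fun _ => dist_nonneg) (fun n => ?_)
    tendsto_one_div_add_atTop_nhds_zero_nat)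
  rw [Real.dist_eq, abs_sub_comm]
  exact hx n

lemma integrableOn_of_ae_abs_le {F : Y → ℝ} {V : Set Y} {C : ℝ} (hV : μ V ≠ ⊤)
    (hF : AEMeasurable F μ) (hb : ∀ᵐ x ∂μ, |F x| ≤ C) : IntegrableOn F V μ :=
  Measure.integrableOn_of_bounded hV hF.aestronglyMeasurable
    (ae_restrict_of_ae (p := fun x => ‖F x‖ ≤ C) hb)

end InfiniteVolume

namespace RW

variable {d : ℕ} (R : RW d)

lemma q_mono : Monotone R.q := fun _ _ h =>
  Finset.sum_le_sum_of_subset_of_nonneg (Finset.range_subset_range.2 h) fun _ _ _ => R.nonneg _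

lemma tendsto_q : Tendsto R.q atTop (𝓝 1) :=
  ((Equiv.hasSum_iff R.e).2 R.total).tendsto_sum_nat

lemma q_le_one (k : ℕ) : R.q k ≤ 1 := R.q_mono.ge_of_tendsto R.tendsto_q k

lemma bddAbove_setOf_q_le {y : ℝ} (hy : y < 1) : BddAbove {j | R.q j ≤ y} := by
  obtain ⟨N, hN⟩ := eventually_atTop.1 (R.tendsto_q.eventually_const_lt hy)
  exact ⟨N, fun j hj => not_lt.1 fun hNj => (hN j hNj.le).not_ge hj⟩

lemma idx_monotoneOn : MonotoneOn R.idx (Set.Iio 1) := fun _ _ _ hb hab =>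
  csSup_le_csSup' (R.bddAbove_setOf_q_le hb) fun _ hj => le_trans hj hab

lemma idx_of_one_le {y : ℝ} (hy : 1 ≤ y) : R.idx y = R.idx 1 := by
  have h : ∀ z : ℝ, 1 ≤ z → {j | R.q j ≤ z} = Set.univ := fun z hz =>
    Set.eq_univ_of_forall fun j => (R.q_le_one j).trans hz
  rw [idx, idx, h y hy, h 1 le_rfl]

lemma measurable_idx : Measurable R.idx := by
  refine measurable_to_countable' fun n => ?_
  have hlow : (R.idx ⁻¹' {n} ∩ Set.Iio 1).OrdConnected := by
    refine ⟨fun x hx y hy z hz => ⟨le_antisymm ?_ ?_, hz.2.trans_lt hy.2⟩⟩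
    · exact hy.1 ▸ R.idx_monotoneOn (hz.2.trans_lt hy.2) hy.2 hz.2
    · exact hx.1 ▸ R.idx_monotoneOn hx.2 (hz.2.trans_lt hy.2) hz.1
  have hhigh : R.idx ⁻¹' {n} ∩ Set.Ici 1 = Set.Ici 1 ∩ {_y | R.idx 1 = n} := by
    ext y
    simp only [Set.mem_inter_iff, Set.mem_preimage, Set.mem_singleton_iff, Set.mem_Ici]
    exact ⟨fun h => ⟨h.2, R.idx_of_one_le h.2 ▸ h.1⟩, fun h => ⟨R.idx_of_one_le h.1 ▸ h.2, h.1⟩⟩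
  rw [← Set.inter_union_compl (R.idx ⁻¹' {n}) (Set.Iio 1), Set.compl_Iio, hhigh]
  exact hlow.measurableSet.union (measurableSet_Ici.inter (MeasurableSet.const _))

lemma measurable_comp_idx {β γ : Type*} [MeasurableSpace β] [MeasurableSpace γ] (f : ℕ → β)
    {g : γ → ℝ} (hg : Measurable g) : Measurable fun x => f (R.idx (g x)) :=
  (measurable_of_countable f).comp (R.measurable_idx.comp hg)

lemma measurable_T : Measurable R.T := by
  have hy : Measurable fun x : RWSpace d => x.2.fst := measurable_snd.fst
  have he := R.measurable_comp_idx R.e hy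
  have hq := R.measurable_comp_idx R.q hy
  have hp := R.measurable_comp_idx (R.p ∘ R.e) hy
  unfold T
  fun_prop

lemma measurable_Tinv : Measurable R.Tinv := by
  have hy : Measurable fun x : RWSpace d => x.2.snd := measurable_snd.snd
  have he := R.measurable_comp_idx R.e hy
  have hq := R.measurable_comp_idx R.q hy
  have hp := R.measurable_comp_idx (R.p ∘ R.e) hy
  unfold Tinv
  fun_prop

lemma measurable_iterZ (t : ℤ) : Measurable (R.iterZ t) := by
  unfold iterZ
  split_ifs
  exacts [R.measurable_T.iterate _, R.measurable_Tinv.iterate _]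

end RW

section Cells

variable {d : ℕ}

def cell (α : Fin d → ℤ) : Set (RWSpace d) := {α} ×ˢ (Set.Ico (0:ℝ) 1 ×ˢ Set.Ico (0:ℝ) 1)

lemma measurableSet_cell_rwB0 (α : Fin d → ℤ) : MeasurableSet[rwB0 d] (cell α) :=
  MeasurableSpace.measurableSet_generateFrom ⟨α, rfl⟩

lemma rwB0_le (d : ℕ) : rwB0 d ≤ (inferInstance : MeasurableSpace (RWSpace d)) :=
  MeasurableSpace.generateFrom_le <| by
    rintro _ ⟨α, rfl⟩
    exact (measurableSet_singleton α).prod (measurableSet_Ico.prod measurableSet_Ico)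

lemma measurableSet_cell (α : Fin d → ℤ) : MeasurableSet (cell α) :=
  rwB0_le d _ (measurableSet_cell_rwB0 α)

lemma rwBlm_le (R : RW d) (l m : ℤ) :
    rwBlm R l m ≤ (inferInstance : MeasurableSpace (RWSpace d)) :=
  iSup₂_le fun k _ => (MeasurableSpace.comap_mono (rwB0_le d)).trans
    (R.measurable_iterZ k).comap_le

lemma rwB0_le_rwBlm (R : RW d) (m : ℕ) : rwB0 d ≤ rwBlm R (-(m : ℤ)) m := by
  have h : rwBk R 0 = rwB0 d := by simp [rwBk, RW.iterZ, MeasurableSpace.comap_id]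
  exact h ▸ le_biSup (rwBk R) (by simp)

lemma measurable_of_mem_rwLinftyB {R : RW d} {m : ℕ} {G : RWSpace d → ℝ}
    (hG : G ∈ rwLinftyB R m) : Measurable G :=
  hG.1.mono (rwBlm_le R _ _) le_rfl

lemma pairwise_disjoint_cell :
    Pairwise (Function.onFun Disjoint (cell : (Fin d → ℤ) → Set (RWSpace d))) :=
  fun _ _ h => Set.disjoint_prod.2 (Or.inl (Set.disjoint_singleton.2 h))

lemma rwMeasure_cell (α : Fin d → ℤ) : rwMeasure d (cell α) = 1 := by
  simp [cell, rwMeasure, Measure.prod_prod, Real.volume_Ico]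

lemma mem_Icc_iff_abs_sub_le {γ α : Fin d → ℤ} {r : ℕ} :
    α ∈ Finset.Icc (γ - r) (γ + r) ↔ ∀ i, |α i - γ i| ≤ r := by
  simp only [Finset.mem_Icc, Pi.le_def, ← forall_and, abs_le]
  refine forall_congr' fun i => ?_
  simp only [Pi.sub_apply, Pi.add_apply, Pi.natCast_apply]
  constructor <;> rintro ⟨h1, h2⟩ <;> constructor <;> linarith

lemma rwBox_eq_biUnion (γ : Fin d → ℤ) (r : ℕ) :
    rwBox γ r = ⋃ α ∈ Finset.Icc (γ - r) (γ + r), cell α := by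
  ext x
  simp only [rwBox, cell, mem_Icc_iff_abs_sub_le, Set.mem_iUnion, Set.mem_prod,
    Set.mem_singleton_iff, exists_prop]
  exact ⟨fun ⟨hx, hsq⟩ => ⟨x.1, hx, rfl, hsq⟩, fun ⟨_, hx, h, hsq⟩ => ⟨h ▸ hx, hsq⟩⟩

lemma rwMeasure_rwBox (γ : Fin d → ℤ) (r : ℕ) :
    rwMeasure d (rwBox γ r) = (Finset.Icc (γ - r) (γ + r)).card := by
  rw [rwBox_eq_biUnion, measure_biUnion_finset (pairwise_disjoint_cell.set_pairwise _)
    fun α _ => measurableSet_cell α]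
  simp [rwMeasure_cell]

lemma toReal_rwMeasure_pos {V : Set (RWSpace d)} (hV : V ∈ rwFamily d) :
    0 < (rwMeasure d V).toReal := by
  obtain ⟨γ, r, -, rfl⟩ := hV
  rw [rwMeasure_rwBox, ENNReal.toReal_natCast, Nat.cast_pos, Finset.card_pos]
  exact ⟨γ, Finset.mem_Icc.2 ⟨by simp, by simp⟩⟩

end Cells

section CellCorrection

variable {d : ℕ}

/-- Vanishing off `ℤ^d × [0,1)²` keeps it `ℬ`-measurable. -/
def cellStep (g : (Fin d → ℤ) → ℝ) (x : RWSpace d) : ℝ :=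
  if x.2 ∈ Set.Ico (0:ℝ) 1 ×ˢ Set.Ico (0:ℝ) 1 then g x.1 else 0

lemma cellStep_of_mem_cell {g : (Fin d → ℤ) → ℝ} {α : Fin d → ℤ} {x : RWSpace d}
    (hx : x ∈ cell α) : cellStep g x = g α := by
  obtain ⟨hα, hsq⟩ := hx
  rw [cellStep, if_pos hsq, Set.mem_singleton_iff.1 hα]

lemma measurable_cellStep (g : (Fin d → ℤ) → ℝ) : Measurable[rwB0 d] (cellStep g) := by
  intro B _
  have h : cellStep g ⁻¹' B =
      (⋃ α, cell α ∩ {_x | g α ∈ B}) ∪ ((⋃ α, cell α)ᶜ ∩ {_x | (0:ℝ) ∈ B}) := by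
    ext x
    by_cases hx : x.2 ∈ Set.Ico (0:ℝ) 1 ×ˢ Set.Ico (0:ℝ) 1 <;> simp [cellStep, cell, hx]
  rw [h]
  exact (MeasurableSet.iUnion fun α => (measurableSet_cell_rwB0 α).inter (.const _)).union
    ((MeasurableSet.iUnion measurableSet_cell_rwB0).compl.inter (.const _))

lemma abs_cellStep_le {g : (Fin d → ℤ) → ℝ} {C : ℝ} (hC : 0 ≤ C) (hg : ∀ α, |g α| ≤ C)
    (x : RWSpace d) : |cellStep g x| ≤ C := by
  unfold cellStep
  split_ifs
  exacts [hg _, by simpa using hC]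

lemma setIntegral_cell_cellStep (g : (Fin d → ℤ) → ℝ) (α : Fin d → ℤ) :
    ∫ x in cell α, cellStep g x ∂rwMeasure d = g α := by
  rw [setIntegral_congr_fun (measurableSet_cell α) fun x hx => cellStep_of_mem_cell hx,
    setIntegral_const, measureReal_def, rwMeasure_cell]
  simp

lemma integrableOn_rwBox_cellStep (g : (Fin d → ℤ) → ℝ) (γ : Fin d → ℤ) (r : ℕ) :
    IntegrableOn (cellStep g) (rwBox γ r) (rwMeasure d) := by
  rw [rwBox_eq_biUnion, integrableOn_finset_iUnion]
  intro α _
  refine (integrableOn_const (C := g α) (by simp [rwMeasure_cell])).congr_fun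
    (fun x hx => (cellStep_of_mem_cell hx).symm) (measurableSet_cell α)

lemma setIntegral_rwBox_cellStep {f : RWSpace d → ℝ} {γ : Fin d → ℤ} {r : ℕ}
    (hf : IntegrableOn f (rwBox γ r) (rwMeasure d)) :
    ∫ x in rwBox γ r, cellStep (fun α => ∫ y in cell α, f y ∂rwMeasure d) x ∂rwMeasure d
      = ∫ x in rwBox γ r, f x ∂rwMeasure d := by
  have hstep := integrableOn_rwBox_cellStep (fun α => ∫ y in cell α, f y ∂rwMeasure d) γ r
  rw [rwBox_eq_biUnion, integrableOn_finset_iUnion] at hf hstep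
  have hcells := pairwise_disjoint_cell.set_pairwise (Finset.Icc (γ - r) (γ + r) : Set (Fin d → ℤ))
  rw [rwBox_eq_biUnion, integral_biUnion_finset _ (fun α _ => measurableSet_cell α) hcells hstep,
    integral_biUnion_finset _ (fun α _ => measurableSet_cell α) hcells hf]
  exact Finset.sum_congr rfl fun α _ => setIntegral_cell_cellStep _ α

end CellCorrection

section GlobalObservables

variable {d : ℕ} {R : RW d} {m : ℕ} {F G : RWSpace d → ℝ} {ε : ℝ}

lemma aemeasurable_of_forall_exists_rwLinftyB
    (h : ∀ ε > 0, ∃ m, ∃ G ∈ rwLinftyB R m, ∀ᵐ x ∂rwMeasure d, |F x - G x| ≤ ε) :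
    AEMeasurable F (rwMeasure d) :=
  aemeasurable_of_forall_ae_abs_sub_le fun ε hε =>
    let ⟨_, G, hG, hFG⟩ := h ε hε
    ⟨G, (measurable_of_mem_rwLinftyB hG).aemeasurable, hFG⟩

lemma integrableOn_of_mem_rwFamily (hF : AEMeasurable F (rwMeasure d)) (hG : G ∈ rwLinftyB R m)
    (hFG : ∀ᵐ x ∂rwMeasure d, |F x - G x| ≤ ε) {V : Set (RWSpace d)} (hV : V ∈ rwFamily d) :
    IntegrableOn F V (rwMeasure d) ∧ IntegrableOn G V (rwMeasure d) := by
  have hfin := (ENNReal.toReal_pos_iff.1 (toReal_rwMeasure_pos hV)).2.ne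
  obtain ⟨C, hC⟩ := hG.2
  refine ⟨integrableOn_of_ae_abs_le hfin hF (C := C + ε) ?_,
    integrableOn_of_ae_abs_le hfin (measurable_of_mem_rwLinftyB hG).aemeasurable (ae_of_all _ hC)⟩
  filter_upwards [hFG] with x hx
  linarith [abs_sub_abs_le_abs_sub (F x) (G x), hC x]

lemma abs_avgOn_sub_le_of_mem_rwFamily (hF : AEMeasurable F (rwMeasure d))
    (hG : G ∈ rwLinftyB R m) (hFG : ∀ᵐ x ∂rwMeasure d, |F x - G x| ≤ ε)
    {V : Set (RWSpace d)} (hV : V ∈ rwFamily d) :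
    |avgOn (rwMeasure d) F V - avgOn (rwMeasure d) G V| ≤ ε :=
  let ⟨hFV, hGV⟩ := integrableOn_of_mem_rwFamily hF hG hFG hV
  abs_avgOn_sub_le (toReal_rwMeasure_pos hV) hFV hGV hFG

lemma avgOn_add_cellStep {V : Set (RWSpace d)} (hV : V ∈ rwFamily d)
    (hF : IntegrableOn F V (rwMeasure d)) (hG : IntegrableOn G V (rwMeasure d)) :
    avgOn (rwMeasure d) (G + cellStep fun α => ∫ x in cell α, (F x - G x) ∂rwMeasure d) V
      = avgOn (rwMeasure d) F V := by
  obtain ⟨γ, r, -, rfl⟩ := hV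
  rw [avgOn, avgOn, Pi.add_def, integral_add hG (integrableOn_rwBox_cellStep _ γ r),
    setIntegral_rwBox_cellStep (f := fun x => F x - G x) (hF.sub hG), integral_sub hF hG,
    add_sub_cancel]

lemma exists_mem_rwG_of_ae_abs_sub_le (hF : AEMeasurable F (rwMeasure d)) {A : ℝ}
    (hA : HasAvg (rwMeasure d) (rwFamily d) F A) (hG : G ∈ rwLinftyB R m) (hε : 0 ≤ ε)
    (hFG : ∀ᵐ x ∂rwMeasure d, |F x - G x| ≤ ε) :
    ∃ G' ∈ rwG R m, ∀ᵐ x ∂rwMeasure d, |F x - G' x| ≤ 2 * ε := by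
  set g : (Fin d → ℤ) → ℝ := fun α => ∫ x in cell α, (F x - G x) ∂rwMeasure d
  have hg : ∀ α, |g α| ≤ ε := fun α => by
    simpa [measureReal_def, rwMeasure_cell] using norm_setIntegral_le_of_norm_le_const_ae
      (s := cell α) (by rw [rwMeasure_cell]; exact ENNReal.one_lt_top)
      (ae_restrict_of_ae (p := fun x => ‖F x - G x‖ ≤ ε) hFG)
  obtain ⟨C, hC⟩ := hG.2
  refine ⟨G + cellStep g, ⟨⟨hG.1.add ((measurable_cellStep g).mono (rwB0_le_rwBlm R m) le_rfl),
    C + ε, fun x => ?_⟩, A, fun δ hδ => ?_⟩, ?_⟩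
  · exact (abs_add_le _ _).trans (add_le_add (hC x) (abs_cellStep_le hε hg x))
  · obtain ⟨M, hM, hMV⟩ := hA δ hδ
    refine ⟨M, hM, fun V hV hVM => ?_⟩
    obtain ⟨hFV, hGV⟩ := integrableOn_of_mem_rwFamily hF hG hFG hV
    rw [avgOn_add_cellStep hV hFV hGV]
    exact hMV V hV hVM
  · filter_upwards [hFG] with x hx
    rw [Pi.add_apply, ← sub_sub, two_mul]
    exact (abs_sub _ _).trans (add_le_add hx (abs_cellStep_le hε hg x))

end GlobalObservables

theorem rw_global_class_general (d : ℕ) (R : RW d) :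
    {F : RWSpace d → ℝ | ∀ ε > 0, ∃ m : ℕ, ∃ F' ∈ rwG R m,
        ∀ᵐ x ∂(rwMeasure d), |F x - F' x| ≤ ε}
      = {F : RWSpace d → ℝ |
          (∀ ε > 0, ∃ m : ℕ, ∃ F' ∈ rwLinftyB R m,
            ∀ᵐ x ∂(rwMeasure d), |F x - F' x| ≤ ε)
          ∧ ∃ A : ℝ, HasAvg (rwMeasure d) (rwFamily d) F A} := by
  ext F
  constructor
  · intro h
    have happrox : ∀ ε > 0, ∃ m, ∃ G ∈ rwLinftyB R m, ∀ᵐ x ∂rwMeasure d, |F x - G x| ≤ ε :=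
      fun ε hε => let ⟨m, G, hG, hFG⟩ := h ε hε; ⟨m, G, hG.1, hFG⟩
    refine ⟨happrox, exists_hasAvg_of_forall_abs_avgOn_sub_le fun ε hε => ?_⟩
    obtain ⟨m, G, ⟨hG, A, hA⟩, hFG⟩ := h ε hε
    exact ⟨G, A, hA, fun V hV => abs_avgOn_sub_le_of_mem_rwFamily
      (aemeasurable_of_forall_exists_rwLinftyB happrox) hG hFG hV⟩
  · rintro ⟨happrox, A, hA⟩ ε hε
    obtain ⟨m, G, hG, hFG⟩ := happrox (ε / 2) (half_pos hε)
    obtain ⟨G', hG', hFG'⟩ := exists_mem_rwG_of_ae_abs_sub_le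
      (aemeasurable_of_forall_exists_rwLinftyB happrox) hA hG (half_pos hε).le hFG
    exact ⟨m, G', hG', by rwa [mul_div_cancel₀ ε two_ne_zero] at hFG'⟩

/-- Lemma 4.4: the `L^∞`-closure `𝔊` of `⋃_m 𝔊_m` equals the set of all `F` in the
`L^∞`-closure of `⋃_m L^∞(X, ℬ_{−m,m}, μ)` possessing an infinite-volume average. -/
theorem rw_global_class (d : ℕ) (hd : 1 ≤ d) (R : RW d) :
    {F : RWSpace d → ℝ | ∀ ε > 0, ∃ m : ℕ, ∃ F' ∈ rwG R m,
        ∀ᵐ x ∂(rwMeasure d), |F x - F' x| ≤ ε}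
      = {F : RWSpace d → ℝ |
          (∀ ε > 0, ∃ m : ℕ, ∃ F' ∈ rwLinftyB R m,
            ∀ᵐ x ∂(rwMeasure d), |F x - F' x| ≤ ε)
          ∧ ∃ A : ℝ, HasAvg (rwMeasure d) (rwFamily d) F A} :=
  rw_global_class_general d R
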